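/- Let α ∈ (0, π] and let G, Γ₁, Γ₂ be as in the context. Let u : ℝ² → ℝ be continuously differentiable on an open set containing cl(G) \ {0}, harmonic on G, and satisfy −sin α · ∂u/∂x₁ + cos α · ∂u/∂x₂ = 0 at every point of Γ₂. Assume there exist constants C > 0 and δ > 0 such that for all x ∈ cl(G) \ {0}: |u(x)|·|∇u(x)| ≤ C|x|^{δ−1} whenever 0 < |x| ≤ 1, and ≤ C|x|^{−δ−1} whenever |x| ≥ 1; assume |∇u|² is integrable on G and x₁ ↦ u(x₁, 0)·∂u/∂x₂(x₁, 0) is integrable on (0, ∞). Then −∫_0^∞ u(x₁, 0)·∂u/∂x₂(x₁, 0) dx₁ = ∫_G |∇u(x)|² dx ≥ 0, and this quantity is strictly positive unless ∇u vanishes identically on G. -/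

import Mathlib

open MeasureTheory

/-- The open plane sector `G = {(r cos θ, r sin θ) : r > 0, 0 < θ < α}` of opening
angle `α`. -/
def sector (α : ℝ) : Set (ℝ × ℝ) :=
  {p | ∃ r θ : ℝ, 0 < r ∧ 0 < θ ∧ θ < α ∧ p = (r * Real.cos θ, r * Real.sin θ)}

/-- First partial derivative `∂u/∂x₁`. -/
noncomputable def pd1 (u : ℝ × ℝ → ℝ) (x : ℝ × ℝ) : ℝ := fderiv ℝ u x (1, 0)

/-- Second partial derivative `∂u/∂x₂`. -/
noncomputable def pd2 (u : ℝ × ℝ → ℝ) (x : ℝ × ℝ) : ℝ := fderiv ℝ u x (0, 1)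

/-- Euclidean norm `|∇u(x)|` of the gradient. -/
noncomputable def gradNorm (u : ℝ × ℝ → ℝ) (x : ℝ × ℝ) : ℝ :=
  Real.sqrt (pd1 u x ^ 2 + pd2 u x ^ 2)

/-- Squared Euclidean norm `|∇u(x)|²` of the gradient. -/
noncomputable def gradSq (u : ℝ × ℝ → ℝ) (x : ℝ × ℝ) : ℝ :=
  pd1 u x ^ 2 + pd2 u x ^ 2

/-- `u` is harmonic on `G`: at every point of `G` it is twice differentiable and
`∂²u/∂x₁² + ∂²u/∂x₂² = 0`. -/
def HarmonicOnSector (α : ℝ) (u : ℝ × ℝ → ℝ) : Prop :=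
  ∀ x ∈ sector α, DifferentiableAt ℝ u x ∧ DifferentiableAt ℝ (fderiv ℝ u) x ∧
    fderiv ℝ (fderiv ℝ u) x (1, 0) (1, 0) + fderiv ℝ (fderiv ℝ u) x (0, 1) (0, 1) = 0

/-- Zero Neumann data on `Γ₂ = {(r cos α, r sin α) : r > 0}`:
`−sin α · ∂u/∂x₁ + cos α · ∂u/∂x₂ = 0` there. -/
def NeumannOnGamma2 (α : ℝ) (u : ℝ × ℝ → ℝ) : Prop :=
  ∀ r : ℝ, 0 < r →
    -Real.sin α * pd1 u (r * Real.cos α, r * Real.sin α)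
      + Real.cos α * pd2 u (r * Real.cos α, r * Real.sin α) = 0

/-!
Green's first identity `∫ |∇u|² = ∫_∂ u ∂_ν u - ∫ u Δu` on the annular sectors
`{ε < |x| ≤ R, 0 < θ < α}`: pulled back by polar coordinates to the rectangle `(ε, R] × (0, α)` it
is the divergence theorem for the field `(r u ∂ᵣu, u ∂_θu / r)`. Harmonicity kills the volume term,
the Neumann condition the flux through `Γ₂`, and `Γ₁` contributes `-∫ u ∂₂u`. By the decay bound
the fluxes through the arcs `|x| = R` and `|x| = ε` are `O(R^(-δ))` and `O(ε^δ)`, so the identity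
survives the limit `ε → 0`, `R → ∞`. Strict positivity holds because `|∇u|²` is continuous and
nonnegative on the open sector.
-/

open Set Filter Topology MeasureTheory Real

section Polar

variable {α r θ : ℝ}

lemma sector_eq_image_polarCoord_symm (α : ℝ) :
    sector α = polarCoord.symm '' (Ioi 0 ×ˢ Ioo 0 α) := by
  ext x
  constructor
  · rintro ⟨r, θ, hr, hθ₀, hθα, rfl⟩
    exact ⟨(r, θ), ⟨hr, hθ₀, hθα⟩, rfl⟩
  · rintro ⟨⟨r, θ⟩, ⟨hr, hθ₀, hθα⟩, rfl⟩
    exact ⟨r, θ, hr, hθ₀, hθα, rfl⟩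

lemma Ioi_prod_Ioo_subset_polarCoord_target (hα : α ≤ π) :
    Ioi 0 ×ˢ Ioo 0 α ⊆ polarCoord.target := fun _ ⟨hr, hθ₀, hθα⟩ =>
  ⟨hr, by linarith [pi_pos], hθα.trans_le hα⟩

lemma isOpen_sector (hα : α ≤ π) : IsOpen (sector α) := by
  rw [sector_eq_image_polarCoord_symm]
  exact polarCoord.symm.isOpen_image_of_subset_source (isOpen_Ioi.prod isOpen_Ioo)
    (Ioi_prod_Ioo_subset_polarCoord_target hα)

lemma sqrt_polarCoord_symm (hr : 0 ≤ r) (θ : ℝ) :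
    √((polarCoord.symm (r, θ)).1 ^ 2 + (polarCoord.symm (r, θ)).2 ^ 2) = r := by
  have : (r * cos θ) ^ 2 + (r * sin θ) ^ 2 = r ^ 2 := by
    linear_combination r ^ 2 * cos_sq_add_sin_sq θ
  simpa [this] using sqrt_sq hr

lemma polarCoord_symm_mem_closure_sector_diff_zero (hα : 0 < α) (hr : 0 < r)
    (hθ : θ ∈ Icc 0 α) : polarCoord.symm (r, θ) ∈ closure (sector α) \ {0} := by
  refine ⟨?_, fun h => ?_⟩
  · rw [sector_eq_image_polarCoord_symm]
    apply image_closure_subset_closure_image continuous_polarCoord_symm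
    refine ⟨(r, θ), ?_, rfl⟩
    rw [closure_prod_eq, closure_Ioi, closure_Ioo hα.ne]
    exact ⟨hr.le, hθ⟩
  · have := sqrt_polarCoord_symm hr.le θ
    rw [mem_singleton_iff.1 h] at this
    norm_num at this
    exact hr.ne this

lemma sector_subset_closure_diff_zero (hα : α ≤ π) :
    sector α ⊆ closure (sector α) \ {0} := by
  rintro _ hx
  refine ⟨subset_closure hx, ?_⟩
  obtain ⟨r, θ, hr, hθ₀, hθα, rfl⟩ := hx
  exact fun h => (mul_pos hr (sin_pos_of_pos_of_lt_pi hθ₀ (hθα.trans_le hα))).ne'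
    (congrArg Prod.snd (mem_singleton_iff.1 h))

end Polar

section Rotation

lemma apply_mk_eq_smul_add_smul {M : Type*} [AddCommGroup M] [Module ℝ M] [TopologicalSpace M]
    (A : ℝ × ℝ →L[ℝ] M) (x y : ℝ) : A (x, y) = x • A (1, 0) + y • A (0, 1) := by
  rw [← map_smul, ← map_smul, ← map_add]
  simp

variable (θ : ℝ)

lemma sq_apply_cos_sin_add_sq_apply_neg_sin_cos (A : ℝ × ℝ →L[ℝ] ℝ) :
    A (cos θ, sin θ) ^ 2 + A (-sin θ, cos θ) ^ 2 = A (1, 0) ^ 2 + A (0, 1) ^ 2 := by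
  simp only [apply_mk_eq_smul_add_smul A (cos θ), apply_mk_eq_smul_add_smul A (-sin θ),
    smul_eq_mul]
  linear_combination (A (1, 0) ^ 2 + A (0, 1) ^ 2) * sin_sq_add_cos_sq θ

lemma apply_cos_sin_add_apply_neg_sin_cos (B : ℝ × ℝ →L[ℝ] ℝ × ℝ →L[ℝ] ℝ) :
    B (cos θ, sin θ) (cos θ, sin θ) + B (-sin θ, cos θ) (-sin θ, cos θ) =
      B (1, 0) (1, 0) + B (0, 1) (0, 1) := by
  simp only [apply_mk_eq_smul_add_smul B (cos θ), apply_mk_eq_smul_add_smul B (-sin θ),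
    add_apply, smul_apply, smul_eq_mul]
  rw [apply_mk_eq_smul_add_smul (B (1, 0)) (cos θ), apply_mk_eq_smul_add_smul (B (0, 1)) (cos θ),
    apply_mk_eq_smul_add_smul (B (1, 0)) (-sin θ), apply_mk_eq_smul_add_smul (B (0, 1)) (-sin θ)]
  simp only [smul_eq_mul]
  linear_combination (B (1, 0) (1, 0) + B (0, 1) (0, 1)) * sin_sq_add_cos_sq θ

end Rotation

section Fluxes

variable {u : ℝ × ℝ → ℝ} {U s : Set (ℝ × ℝ)}

/- In polar coordinates `p = (r, θ)` these are `r u ∂ᵣu` and `u ∂_θu / r`, the components of the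
field `u ∇u` scaled so that `∂ᵣ radialFlux + ∂_θ angularFlux = r div (u ∇u) = r (|∇u|² + u Δu)`. -/
noncomputable def radialFlux (u : ℝ × ℝ → ℝ) (p : ℝ × ℝ) : ℝ :=
  p.1 * (u (polarCoord.symm p) * fderiv ℝ u (polarCoord.symm p) (cos p.2, sin p.2))

noncomputable def angularFlux (u : ℝ × ℝ → ℝ) (p : ℝ × ℝ) : ℝ :=
  u (polarCoord.symm p) * fderiv ℝ u (polarCoord.symm p) (-sin p.2, cos p.2)

lemma hasFDerivAt_radialFlux_angularFlux {p : ℝ × ℝ}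
    (hu : DifferentiableAt ℝ u (polarCoord.symm p))
    (hDu : DifferentiableAt ℝ (fderiv ℝ u) (polarCoord.symm p)) :
    ∃ D₁ D₂ : ℝ × ℝ →L[ℝ] ℝ, HasFDerivAt (radialFlux u) D₁ p ∧
      HasFDerivAt (angularFlux u) D₂ p ∧
      D₁ (1, 0) + D₂ (0, 1) = p.1 * (gradSq u (polarCoord.symm p) + u (polarCoord.symm p) *
        (fderiv ℝ (fderiv ℝ u) (polarCoord.symm p) (1, 0) (1, 0) +
          fderiv ℝ (fderiv ℝ u) (polarCoord.symm p) (0, 1) (0, 1))) := by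
  have hP := hasFDerivAt_polarCoord_symm p
  have hux := hu.hasFDerivAt.comp p hP
  have hDux := hDu.hasFDerivAt.comp p hP
  have hθ : HasFDerivAt (fun q : ℝ × ℝ => q.2) (ContinuousLinearMap.snd ℝ ℝ ℝ) p :=
    hasFDerivAt_snd
  have her : HasFDerivAt (fun q : ℝ × ℝ => ((cos q.2, sin q.2) : ℝ × ℝ)) _ p :=
    ((hasDerivAt_cos p.2).comp_hasFDerivAt p hθ).prodMk
      ((hasDerivAt_sin p.2).comp_hasFDerivAt p hθ)
  have heθ : HasFDerivAt (fun q : ℝ × ℝ => ((-sin q.2, cos q.2) : ℝ × ℝ)) _ p :=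
    ((hasDerivAt_sin p.2).comp_hasFDerivAt p hθ).neg.prodMk
      ((hasDerivAt_cos p.2).comp_hasFDerivAt p hθ)
  refine ⟨_, _, hasFDerivAt_fst.mul (hux.mul (hDux.clm_apply her)),
    hux.mul (hDux.clm_apply heθ), ?_⟩
  have hrot : ((-(p.1 * sin p.2), p.1 * cos p.2) : ℝ × ℝ) = p.1 • (-sin p.2, cos p.2) := by
    simp
  simp only [Function.comp_apply, polarCoord_symm_apply, neg_smul, fderivPolarCoordSymm, neg_mul,
    smul_add, add_apply, smul_apply, ContinuousLinearMap.comp_apply,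
    ContinuousLinearMap.prod_apply, neg_apply, ContinuousLinearMap.coe_snd', smul_eq_mul, mul_zero,
    neg_zero, ContinuousLinearMap.flip_apply, LinearMap.coe_toContinuousLinearMap',
    Matrix.toLin_finTwoProd_apply, mul_one, add_zero, ContinuousLinearMap.coe_fst', zero_add,
    gradSq, pd1, pd2]
  rw [hrot, ← Prod.neg_mk, Prod.mk_zero_zero, ← sq_apply_cos_sin_add_sq_apply_neg_sin_cos p.2,
    ← apply_cos_sin_add_apply_neg_sin_cos p.2]
  simp only [map_smul, map_neg, map_zero, smul_apply, smul_eq_mul]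
  ring

lemma continuousOn_gradSq (hDu : ContinuousOn (fderiv ℝ u) U) : ContinuousOn (gradSq u) U :=
  ((hDu.clm_apply continuousOn_const).pow 2).add ((hDu.clm_apply continuousOn_const).pow 2)

lemma continuousOn_radialFlux (hu : ContinuousOn u U) (hDu : ContinuousOn (fderiv ℝ u) U)
    (hs : MapsTo polarCoord.symm s U) : ContinuousOn (radialFlux u) s :=
  continuousOn_fst.mul ((hu.comp continuous_polarCoord_symm.continuousOn hs).mul
    ((hDu.comp continuous_polarCoord_symm.continuousOn hs).clm_apply (by fun_prop)))

lemma continuousOn_angularFlux (hu : ContinuousOn u U) (hDu : ContinuousOn (fderiv ℝ u) U)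
    (hs : MapsTo polarCoord.symm s U) : ContinuousOn (angularFlux u) s :=
  (hu.comp continuous_polarCoord_symm.continuousOn hs).mul
    ((hDu.comp continuous_polarCoord_symm.continuousOn hs).clm_apply (by fun_prop))

lemma HarmonicOnSector.hasFDerivAt_fluxes {α : ℝ} (hharm : HarmonicOnSector α u) {p : ℝ × ℝ}
    (hp : polarCoord.symm p ∈ sector α) :
    HasFDerivAt (radialFlux u) (fderiv ℝ (radialFlux u) p) p ∧
      HasFDerivAt (angularFlux u) (fderiv ℝ (angularFlux u) p) p ∧
      fderiv ℝ (radialFlux u) p (1, 0) + fderiv ℝ (angularFlux u) p (0, 1) =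
        p.1 * gradSq u (polarCoord.symm p) := by
  obtain ⟨hdu, hdDu, hΔ⟩ := hharm _ hp
  obtain ⟨D₁, D₂, hD₁, hD₂, hD⟩ := hasFDerivAt_radialFlux_angularFlux hdu hdDu
  rw [hD₁.fderiv, hD₂.fderiv, hD, hΔ, mul_zero, add_zero]
  exact ⟨hD₁, hD₂, rfl⟩

lemma angularFlux_zero_angle (u : ℝ × ℝ → ℝ) (r : ℝ) :
    angularFlux u (r, 0) = u (r, 0) * pd2 u (r, 0) := by
  simp [angularFlux, pd2]

lemma angularFlux_eq_zero_of_neumann {α r : ℝ} (hu : NeumannOnGamma2 α u) (hr : 0 < r) :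
    angularFlux u (r, α) = 0 := by
  rw [angularFlux, apply_mk_eq_smul_add_smul, smul_eq_mul, smul_eq_mul]
  exact mul_eq_zero_of_right _ (hu r hr)

end Fluxes

lemma ae_restrict_Icc_mem_Ioo_prod_Ioo (a b : ℝ × ℝ) :
    ∀ᵐ p ∂volume.restrict (Icc a b), p ∈ Ioo a.1 b.1 ×ˢ Ioo a.2 b.2 := by
  have : (Ioo a.1 b.1 ×ˢ Ioo a.2 b.2 : Set (ℝ × ℝ)) =ᵐ[volume] Icc a b := by
    rw [Measure.volume_eq_prod, Icc_prod_eq]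
    exact Measure.set_prod_ae_eq Ioo_ae_eq_Icc Ioo_ae_eq_Icc
  rw [← Measure.restrict_congr_set this]
  exact ae_restrict_mem (measurableSet_Ioo.prod measurableSet_Ioo)

section AnnularSector

variable {α ε R : ℝ} {u : ℝ × ℝ → ℝ} {U : Set (ℝ × ℝ)}

def annularSector (α ε R : ℝ) : Set (ℝ × ℝ) :=
  polarCoord.symm '' (Ioc ε R ×ˢ Ioo 0 α)

lemma Ioc_prod_Ioo_subset_polarCoord_target (hα : α ≤ π) (hε : 0 ≤ ε) :
    Ioc ε R ×ˢ Ioo 0 α ⊆ polarCoord.target :=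
  (prod_mono (fun _ hr => hε.trans_lt hr.1) le_rfl).trans
    (Ioi_prod_Ioo_subset_polarCoord_target hα)

lemma measurableSet_annularSector (hα : α ≤ π) (hε : 0 ≤ ε) :
    MeasurableSet (annularSector α ε R) :=
  measurable_image_of_fderivWithin (measurableSet_Ioc.prod measurableSet_Ioo)
    (fun p _ => (hasFDerivAt_polarCoord_symm p).hasFDerivWithinAt)
    (polarCoord.symm.injOn.mono (Ioc_prod_Ioo_subset_polarCoord_target hα hε))

lemma setIntegral_annularSector (hα : α ≤ π) (hε : 0 ≤ ε) (f : ℝ × ℝ → ℝ) :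
    ∫ x in annularSector α ε R, f x =
      ∫ p in Icc ((ε, 0) : ℝ × ℝ) (R, α), p.1 * f (polarCoord.symm p) := by
  rw [annularSector, integral_image_eq_integral_abs_det_fderiv_smul volume
    (measurableSet_Ioc.prod measurableSet_Ioo)
    (fun p _ => (hasFDerivAt_polarCoord_symm p).hasFDerivWithinAt)
    (polarCoord.symm.injOn.mono (Ioc_prod_Ioo_subset_polarCoord_target hα hε))]
  simp_rw [det_fderivPolarCoordSymm, smul_eq_mul]
  have hae : (Ioc ε R ×ˢ Ioo 0 α : Set (ℝ × ℝ)) =ᵐ[volume] Icc ε R ×ˢ Icc 0 α := by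
    rw [Measure.volume_eq_prod]
    exact Measure.set_prod_ae_eq Ioc_ae_eq_Icc Ioo_ae_eq_Icc
  rw [Icc_prod_eq, setIntegral_congr_set hae]
  refine setIntegral_congr_fun (measurableSet_Icc.prod measurableSet_Icc) fun p hp => ?_
  rw [abs_of_nonneg (hε.trans hp.1.1)]

lemma integral_gradSq_annularSector (hα₀ : 0 < α) (hα : α ≤ π) (hU : IsOpen U)
    (hUsub : closure (sector α) \ {0} ⊆ U) (hu : ContDiffOn ℝ 1 u U)
    (hharm : HarmonicOnSector α u) (hneu : NeumannOnGamma2 α u) (hε : 0 < ε) (hεR : ε ≤ R) :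
    ∫ x in annularSector α ε R, gradSq u x =
      -(∫ t in Ioc ε R, u (t, 0) * pd2 u (t, 0)) +
        ((∫ θ in (0 : ℝ)..α, radialFlux u (R, θ)) - ∫ θ in (0 : ℝ)..α, radialFlux u (ε, θ)) := by
  have hDu : ContinuousOn (fderiv ℝ u) U := hu.continuousOn_fderiv_of_isOpen hU le_rfl
  have hmaps : MapsTo polarCoord.symm (Icc ((ε, 0) : ℝ × ℝ) (R, α)) U := by
    rintro ⟨r, θ⟩ ⟨⟨hεr, hθ₀⟩, -, hθα⟩
    exact hUsub (polarCoord_symm_mem_closure_sector_diff_zero hα₀ (hε.trans_le hεr) ⟨hθ₀, hθα⟩)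
  have hdiv : ∀ p ∈ Ioo ε R ×ˢ Ioo 0 α, _ := fun p ⟨hr, hθ₀, hθα⟩ =>
    hharm.hasFDerivAt_fluxes (p := p) ⟨p.1, p.2, hε.trans hr.1, hθ₀, hθα, rfl⟩
  have hdiv_ae : (fun p => fderiv ℝ (radialFlux u) p (1, 0) + fderiv ℝ (angularFlux u) p (0, 1))
      =ᵐ[volume.restrict (Icc ((ε, 0) : ℝ × ℝ) (R, α))]
        fun p => p.1 * gradSq u (polarCoord.symm p) := by
    filter_upwards [ae_restrict_Icc_mem_Ioo_prod_Ioo (ε, 0) (R, α)] with p hp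
      using (hdiv p hp).2.2
  have hint : IntegrableOn (fun p : ℝ × ℝ => p.1 * gradSq u (polarCoord.symm p))
      (Icc ((ε, 0) : ℝ × ℝ) (R, α)) :=
    (continuousOn_fst.mul ((continuousOn_gradSq hDu).comp
      continuous_polarCoord_symm.continuousOn hmaps)).integrableOn_compact isCompact_Icc
  have hgreen := integral_divergence_prod_Icc_of_hasFDerivAt_off_countable_of_le _ _ _ _
    (ε, 0) (R, α) ⟨hεR, hα₀.le⟩ ∅ countable_empty
    (continuousOn_radialFlux hu.continuousOn hDu hmaps)
    (continuousOn_angularFlux hu.continuousOn hDu hmaps)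
    (fun p hp => (hdiv p hp.1).1) (fun p hp => (hdiv p hp.1).2.1)
    (hint.congr_fun_ae hdiv_ae.symm)
  rw [integral_congr_ae hdiv_ae, ← setIntegral_annularSector hα hε.le] at hgreen
  rw [hgreen, intervalIntegral.integral_congr (g := fun _ => 0)
    fun r hr => angularFlux_eq_zero_of_neumann hneu (hε.trans_le (uIcc_of_le hεR ▸ hr).1)]
  simp only [angularFlux_zero_angle, intervalIntegral.integral_of_le hεR,
    integral_zero]
  ring

end AnnularSector

section Arcs

variable {α C δ : ℝ} {u : ℝ × ℝ → ℝ}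

lemma abs_radialFlux_le (u : ℝ × ℝ → ℝ) {r : ℝ} (hr : 0 ≤ r) (θ : ℝ) :
    |radialFlux u (r, θ)| ≤
      r * (|u (polarCoord.symm (r, θ))| * gradNorm u (polarCoord.symm (r, θ))) := by
  set x := polarCoord.symm (r, θ)
  have hradial : |fderiv ℝ u x (cos θ, sin θ)| ≤ gradNorm u x := by
    refine abs_le_sqrt ?_
    rw [pd1, pd2, ← sq_apply_cos_sin_add_sq_apply_neg_sin_cos θ]
    exact le_add_of_nonneg_right (sq_nonneg _)
  rw [radialFlux, abs_mul, abs_mul, abs_of_nonneg hr]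
  gcongr

lemma tendsto_integral_radialFlux_of_le {l : Filter ℝ} {g : ℝ → ℝ} (hα : 0 ≤ α)
    (hbound : ∀ᶠ r in l, 0 ≤ r ∧ ∀ θ ∈ Icc 0 α,
      |u (polarCoord.symm (r, θ))| * gradNorm u (polarCoord.symm (r, θ)) ≤ g r)
    (hg : Tendsto (fun r => r * g r) l (𝓝 0)) :
    Tendsto (fun r => ∫ θ in (0 : ℝ)..α, radialFlux u (r, θ)) l (𝓝 0) := by
  refine squeeze_zero_norm' (a := fun r => r * g r * |α - 0|) ?_ (by simpa using hg.mul_const _)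
  filter_upwards [hbound] with r ⟨hr, hb⟩
  refine intervalIntegral.norm_integral_le_of_norm_le_const fun θ hθ => ?_
  rw [uIoc_of_le hα] at hθ
  exact (abs_radialFlux_le u hr θ).trans
    (mul_le_mul_of_nonneg_left (hb θ (Ioc_subset_Icc_self hθ)) hr)

lemma tendsto_integral_radialFlux_atTop (hα : 0 ≤ α) (hδ : 0 < δ)
    (hdecay : ∀ r ≥ 1, ∀ θ ∈ Icc 0 α,
      |u (polarCoord.symm (r, θ))| * gradNorm u (polarCoord.symm (r, θ)) ≤ C * r ^ (-δ - 1)) :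
    Tendsto (fun r => ∫ θ in (0 : ℝ)..α, radialFlux u (r, θ)) atTop (𝓝 0) := by
  refine tendsto_integral_radialFlux_of_le hα (g := fun r => C * r ^ (-δ - 1)) ?_ ?_
  · filter_upwards [eventually_ge_atTop 1] with r hr using ⟨by linarith, hdecay r hr⟩
  · refine (by simpa using (tendsto_rpow_neg_atTop hδ).const_mul C :
      Tendsto (fun r : ℝ => C * r ^ (-δ)) atTop (𝓝 0)).congr' ?_
    filter_upwards [eventually_gt_atTop 0] with r hr
    rw [rpow_sub_one hr.ne']
    field_simp

lemma tendsto_integral_radialFlux_nhdsGT_zero (hα : 0 ≤ α) (hδ : 0 < δ)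
    (hdecay : ∀ r ∈ Ioc 0 1, ∀ θ ∈ Icc 0 α,
      |u (polarCoord.symm (r, θ))| * gradNorm u (polarCoord.symm (r, θ)) ≤ C * r ^ (δ - 1)) :
    Tendsto (fun r => ∫ θ in (0 : ℝ)..α, radialFlux u (r, θ)) (𝓝[>] 0) (𝓝 0) := by
  refine tendsto_integral_radialFlux_of_le hα (g := fun r => C * r ^ (δ - 1)) ?_ ?_
  · filter_upwards [Ioc_mem_nhdsGT one_pos] with r hr using ⟨hr.1.le, hdecay r hr⟩
  · have hpow : Tendsto (fun r : ℝ => r ^ δ) (𝓝[>] 0) (𝓝 0) := by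
      simpa [zero_rpow hδ.ne'] using
        ((continuous_rpow_const hδ.le).tendsto 0).mono_left nhdsWithin_le_nhds
    refine (by simpa using hpow.const_mul C :
      Tendsto (fun r : ℝ => C * r ^ δ) (𝓝[>] 0) (𝓝 0)).congr' ?_
    filter_upwards [self_mem_nhdsWithin] with r (hr : 0 < r)
    rw [rpow_sub_one hr.ne']
    field_simp

end Arcs

lemma monotone_Ioc_inv_succ : Monotone fun n : ℕ => Ioc ((n + 1 : ℝ)⁻¹) (n + 1) := by
  intro m n hmn
  have : (m + 1 : ℝ) ≤ n + 1 := by exact_mod_cast Nat.succ_le_succ hmn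
  exact Ioc_subset_Ioc (inv_anti₀ (by positivity) this) this

lemma iUnion_Ioc_inv_succ : ⋃ n : ℕ, Ioc ((n + 1 : ℝ)⁻¹) (n + 1) = Ioi 0 := by
  refine subset_antisymm (iUnion_subset fun n r hr => (inv_pos.2 (by positivity)).trans hr.1)
    fun r (hr : 0 < r) => ?_
  obtain ⟨n, hn⟩ := exists_nat_gt (max r r⁻¹)
  rw [max_lt_iff] at hn
  exact mem_iUnion.2 ⟨n, inv_lt_of_inv_lt₀ hr (by linarith), by linarith⟩

lemma monotone_annularSector (α : ℝ) :
    Monotone fun n : ℕ => annularSector α (n + 1 : ℝ)⁻¹ (n + 1) :=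
  fun _ _ hmn => image_mono (prod_mono (monotone_Ioc_inv_succ hmn) le_rfl)

lemma iUnion_annularSector (α : ℝ) :
    ⋃ n : ℕ, annularSector α (n + 1 : ℝ)⁻¹ (n + 1) = sector α := by
  simp_rw [annularSector, ← image_iUnion, ← iUnion_prod_const, iUnion_Ioc_inv_succ,
    sector_eq_image_polarCoord_symm]

lemma tendsto_setIntegral_Ioc_inv_succ {f : ℝ → ℝ} (hf : IntegrableOn f (Ioi 0)) :
    Tendsto (fun n : ℕ => ∫ t in Ioc ((n + 1 : ℝ)⁻¹) (n + 1), f t) atTop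
      (𝓝 (∫ t in Ioi 0, f t)) := by
  rw [← iUnion_Ioc_inv_succ] at hf ⊢
  exact tendsto_setIntegral_of_monotone (fun _ => measurableSet_Ioc) monotone_Ioc_inv_succ hf

lemma tendsto_setIntegral_annularSector {α : ℝ} (hα : α ≤ π) {f : ℝ × ℝ → ℝ}
    (hf : IntegrableOn f (sector α)) :
    Tendsto (fun n : ℕ => ∫ x in annularSector α (n + 1 : ℝ)⁻¹ (n + 1), f x) atTop
      (𝓝 (∫ x in sector α, f x)) := by
  rw [← iUnion_annularSector α] at hf ⊢
  exact tendsto_setIntegral_of_monotone (fun _ => measurableSet_annularSector hα (by positivity))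
    (monotone_annularSector α) hf

lemma setIntegral_pos_of_continuousAt {X : Type*} [TopologicalSpace X] [MeasurableSpace X]
    [OpensMeasurableSpace X] {μ : Measure X} [μ.IsOpenPosMeasure] {f : X → ℝ} {s : Set X}
    {x : X} (hs : IsOpen s) (hx : x ∈ s) (hfx : 0 < f x) (hf : ContinuousAt f x)
    (hnonneg : ∀ y ∈ s, 0 ≤ f y) (hfi : IntegrableOn f s μ) : 0 < ∫ y in s, f y ∂μ := by
  rw [setIntegral_pos_iff_support_of_nonneg_ae (ae_restrict_of_forall_mem hs.measurableSet
    hnonneg) hfi]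
  exact Measure.measure_pos_of_mem_nhds μ (inter_mem (hf.eventually_ne hfx.ne') (hs.mem_nhds hx))

lemma gradSq_nonneg (u : ℝ × ℝ → ℝ) (x : ℝ × ℝ) : 0 ≤ gradSq u x := by
  unfold gradSq; positivity

lemma gradSq_pos {u : ℝ × ℝ → ℝ} {x : ℝ × ℝ} (h : ¬(pd1 u x = 0 ∧ pd2 u x = 0)) :
    0 < gradSq u x := by
  rcases not_and_or.1 h with h | h <;> unfold gradSq <;> positivity

/-- Positivity of the Dirichlet-to-Neumann map: for harmonic `u` with
zero Neumann data on `Γ₂`, suitable decay and integrability,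
`−∫₀^∞ u(x₁,0) ∂u/∂x₂(x₁,0) dx₁ = ∫_G |∇u|² ≥ 0`, with strict positivity unless
`∇u` vanishes identically on `G`. -/
theorem stmt_10 (α : ℝ) (hα₀ : 0 < α) (hα₁ : α ≤ Real.pi)
    (u : ℝ × ℝ → ℝ)
    (hu_smooth : ∃ U : Set (ℝ × ℝ), IsOpen U ∧
      closure (sector α) \ {(0 : ℝ × ℝ)} ⊆ U ∧ ContDiffOn ℝ 1 u U)
    (hu_harm : HarmonicOnSector α u)
    (hu_neu : NeumannOnGamma2 α u)
    (hdecay : ∃ C : ℝ, 0 < C ∧ ∃ δ : ℝ, 0 < δ ∧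
      ∀ x ∈ closure (sector α) \ {(0 : ℝ × ℝ)},
        (Real.sqrt (x.1 ^ 2 + x.2 ^ 2) ≤ 1 →
          |u x| * gradNorm u x ≤ C * Real.sqrt (x.1 ^ 2 + x.2 ^ 2) ^ (δ - 1)) ∧
        (1 ≤ Real.sqrt (x.1 ^ 2 + x.2 ^ 2) →
          |u x| * gradNorm u x ≤ C * Real.sqrt (x.1 ^ 2 + x.2 ^ 2) ^ (-δ - 1)))
    (hint : IntegrableOn (gradSq u) (sector α) volume)
    (hint1 : IntegrableOn (fun x₁ : ℝ => u (x₁, 0) * pd2 u (x₁, 0)) (Set.Ioi 0) volume) :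
    (-∫ x₁ in Set.Ioi (0 : ℝ), u (x₁, 0) * pd2 u (x₁, 0)) = ∫ x in sector α, gradSq u x ∧
    0 ≤ ∫ x in sector α, gradSq u x ∧
    (¬ (∀ x ∈ sector α, pd1 u x = 0 ∧ pd2 u x = 0) →
      0 < ∫ x in sector α, gradSq u x) := by
  obtain ⟨U, hU, hUsub, hu⟩ := hu_smooth
  obtain ⟨C, -, δ, hδ, hdec⟩ := hdecay
  have hdec_polar : ∀ r : ℝ, 0 < r → ∀ θ ∈ Icc 0 α,
      (r ≤ 1 → |u (polarCoord.symm (r, θ))| * gradNorm u (polarCoord.symm (r, θ)) ≤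
        C * r ^ (δ - 1)) ∧
      (1 ≤ r → |u (polarCoord.symm (r, θ))| * gradNorm u (polarCoord.symm (r, θ)) ≤
        C * r ^ (-δ - 1)) := fun r hr θ hθ => by
    simpa only [sqrt_polarCoord_symm hr.le] using
      hdec _ (polarCoord_symm_mem_closure_sector_diff_zero hα₀ hr hθ)
  have hR : Tendsto (fun n : ℕ => (n + 1 : ℝ)) atTop atTop :=
    tendsto_atTop_add_const_right _ 1 tendsto_natCast_atTop_atTop
  have houter := (tendsto_integral_radialFlux_atTop hα₀.le hδ
    fun r hr θ hθ => (hdec_polar r (by linarith) θ hθ).2 hr).comp hR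
  have hinner := (tendsto_integral_radialFlux_nhdsGT_zero hα₀.le hδ
    fun r hr θ hθ => (hdec_polar r hr.1 θ hθ).1 hr.2).comp (tendsto_inv_atTop_nhdsGT_zero.comp hR)
  have hgreen := ((tendsto_setIntegral_Ioc_inv_succ hint1).neg.add (houter.sub hinner)).congr
    fun n => (integral_gradSq_annularSector hα₀ hα₁ hU hUsub hu hu_harm hu_neu (by positivity)
      ((inv_le_one_of_one_le₀ (by simp)).trans (by simp))).symm
  refine ⟨by simpa using tendsto_nhds_unique hgreen (tendsto_setIntegral_annularSector hα₁ hint),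
    setIntegral_nonneg (isOpen_sector hα₁).measurableSet fun x _ => gradSq_nonneg u x, ?_⟩
  intro hne
  obtain ⟨x, hx, hx0⟩ := not_forall₂.1 hne
  have hxU : U ∈ 𝓝 x := hU.mem_nhds (hUsub (sector_subset_closure_diff_zero hα₁ hx))
  exact setIntegral_pos_of_continuousAt (isOpen_sector hα₁) hx (gradSq_pos hx0)
    ((continuousOn_gradSq (hu.continuousOn_fderiv_of_isOpen hU le_rfl)).continuousAt hxU)
    (fun y _ => gradSq_nonneg u y) hint
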